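/- For every integer m ≥ 2, ∑_{k=0}^{m} C(m,k)·D(m,k) = 0, where D(m,k) is defined in the context. (Equivalently: for the uniform per-item value distribution on [0,1] and the split attack, at q = 1/2 the expected utility of truthful bidding equals the expected utility of the attack, for any number of bidders n = m+1 ≥ 3.) -/

import Mathlib

open intervalIntegral

/-- Truthful minus split-attack utility of a bidder of true type (2,1) submitting the
false-name bids (1,1),(1,1), when the two highest one-item adversary per-item values are
`a ≥ b` and the highest two-item adversary per-item value is `w`. -/
noncomputable def delta (w a b : ℝ) : ℝ :=
  if w ≤ (a + b) / 2 then a - b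
  else if w ≤ (1 + a) / 2 then 2 * a - 2 * w
  else 2 * w - 2

/-- Expected value of `delta` for `m` adversaries with i.i.d. uniform per-item values on
[0,1], of which `k` demand one item, with respect to the relevant order statistics. -/
noncomputable def D (m k : ℕ) : ℝ :=
  if k = 0 then
    m * ∫ w in (0:ℝ)..1, w ^ (m - 1) * delta w 0 0
  else if k = 1 then
    ((m : ℝ) - 1) * ∫ v in (0:ℝ)..1, ∫ w in (0:ℝ)..1, w ^ (m - 2) * delta w v 0
  else if k = m then
    (m : ℝ) * ((m : ℝ) - 1) *
      ∫ v₁ in (0:ℝ)..1, ∫ v₂ in (0:ℝ)..v₁, v₂ ^ (m - 2) * delta 0 v₁ v₂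
  else
    (k : ℝ) * ((k : ℝ) - 1) * ((m : ℝ) - k) *
      ∫ v₁ in (0:ℝ)..1, ∫ v₂ in (0:ℝ)..v₁, ∫ w in (0:ℝ)..1,
        v₂ ^ (k - 2) * w ^ (m - k - 1) * delta w v₁ v₂

/-!
For `b ≤ 1` one has `δ(w,a,b) = 2 (1 - max w ((a+b)/2)) - 4 (1 - max w ((1+a)/2))`, and
`∫₀¹ wᵖ (1 - max w t) dw = (1 - t^(p+2)) / ((p+1)(p+2))`. So every moment `∫₀¹ wᵖ δ dw` is an
explicit polynomial in `(a+b)/2` and `(1+a)/2`, and the boundary terms `k = 0, 1, m` are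
elementary integrals. For `2 ≤ k ≤ m - 1` the identity `C(m,k) k (k-1) = m (m-k+1) C(m-1,k-2)`
lets the binomial theorem sum the middle terms under the integral sign. The result is a single
polynomial on the triangle `0 ≤ v₂ ≤ v₁ ≤ 1`, which is integrated by explicit antiderivatives. The
four closed forms share the denominator `m + 1`, and their numerators cancel.
-/

open Set

lemma hasDerivAt_affine_pow_succ (n : ℕ) (c d x : ℝ) :
    HasDerivAt (fun y => (c * y + d) ^ (n + 1)) ((n + 1) * c * (c * x + d) ^ n) x := by
  simpa [mul_comm, mul_left_comm] using
    ((hasDerivAt_id x).const_mul c |>.add_const d).fun_pow (n + 1)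

lemma sum_range_choose_mul_pow_mul_pow {R : Type*} [CommRing R] (n : ℕ) (x y : R) :
    ∑ j ∈ Finset.range n, ((n + 1).choose j : R) * (x ^ j * y ^ (n + 1 - j))
      = (x + y) ^ (n + 1) - x ^ (n + 1) - (n + 1) * x ^ n * y := by
  rw [Finset.sum_congr rfl fun j _ => mul_comm _ _, add_pow, Finset.sum_range_succ,
    Finset.sum_range_succ, Nat.choose_self, Nat.choose_succ_self_right, Nat.sub_self,
    show n + 1 - n = 1 by omega]
  push_cast
  ring

lemma integral_triangle_congr {f g : ℝ → ℝ → ℝ}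
    (h : ∀ x ∈ Icc (0:ℝ) 1, ∀ y ∈ Icc 0 x, f x y = g x y) :
    ∫ x in (0:ℝ)..1, ∫ y in (0:ℝ)..x, f x y
      = ∫ x in (0:ℝ)..1, ∫ y in (0:ℝ)..x, g x y := by
  refine integral_congr fun x hx => integral_congr fun y hy => ?_
  rw [uIcc_of_le zero_le_one] at hx
  rw [uIcc_of_le hx.1] at hy
  exact h x hx y hy

lemma integral_triangle_eq_sub_of_hasDerivAt {f F : ℝ → ℝ → ℝ} {G : ℝ → ℝ}
    (hF : ∀ x y, HasDerivAt (F x) (f x y) y) (hf : ∀ x, Continuous (f x))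
    (hG : ∀ x, HasDerivAt G (F x x - F x 0) x) (hG' : Continuous fun x => F x x - F x 0) :
    ∫ x in (0:ℝ)..1, ∫ y in (0:ℝ)..x, f x y = G 1 - G 0 := by
  rw [integral_congr fun x _ => integral_eq_sub_of_hasDerivAt (fun y _ => hF x y)
    ((hf x).intervalIntegrable _ _)]
  exact integral_eq_sub_of_hasDerivAt (fun x _ => hG x) (hG'.intervalIntegrable _ _)

lemma integral_triangle_finset_sum {ι : Type*} (s : Finset ι) {f : ι → ℝ → ℝ → ℝ}
    (hf : ∀ i ∈ s, Continuous (Function.uncurry (f i))) :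
    ∑ i ∈ s, ∫ x in (0:ℝ)..1, ∫ y in (0:ℝ)..x, f i x y
      = ∫ x in (0:ℝ)..1, ∫ y in (0:ℝ)..x, ∑ i ∈ s, f i x y := by
  rw [← integral_finsetSum fun i hi =>
    (continuous_parametric_intervalIntegral_of_continuous (hf i hi) continuous_id')
      |>.intervalIntegrable _ _]
  exact integral_congr fun x _ =>
    (integral_finsetSum fun i hi => ((hf i hi).uncurry_left x).intervalIntegrable _ _).symm

lemma integral_pow_mul_one_sub_max (p : ℕ) {t : ℝ} (ht₀ : 0 ≤ t) (ht₁ : t ≤ 1) :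
    ∫ w in (0:ℝ)..1, w ^ p * (1 - max w t) = (1 - t ^ (p + 2)) / ((p + 1) * (p + 2)) := by
  have hc : Continuous fun w : ℝ => w ^ p * (1 - max w t) := by fun_prop
  rw [← integral_add_adjacent_intervals (hc.intervalIntegrable 0 t) (hc.intervalIntegrable t 1)]
  have below : ∫ w in (0:ℝ)..t, w ^ p * (1 - max w t) = ∫ w in (0:ℝ)..t, w ^ p * (1 - t) :=
    integral_congr fun w hw => by
      rw [uIcc_of_le ht₀] at hw
      simp only [max_eq_right hw.2]
  have above : ∫ w in t..1, w ^ p * (1 - max w t) = ∫ w in t..1, (w ^ p - w ^ (p + 1)) :=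
    integral_congr fun w hw => by
      rw [uIcc_of_le ht₁] at hw
      simp only [max_eq_left hw.1]
      ring
  rw [below, above, integral_mul_const,
    integral_sub (intervalIntegrable_pow _) (intervalIntegrable_pow _),
    integral_pow, integral_pow, integral_pow]
  field_simp
  push_cast
  ring

lemma delta_eq_sub_max (w a b : ℝ) (hb : b ≤ 1) :
    delta w a b = 2 * (1 - max w ((a + b) / 2)) - 4 * (1 - max w ((1 + a) / 2)) := by
  unfold delta
  split_ifs with h₁ h₂
  · rw [max_eq_right h₁, max_eq_right (by linarith)]; ring
  · rw [max_eq_left (by linarith), max_eq_right h₂]; ring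
  · rw [max_eq_left (by linarith), max_eq_left (by linarith)]; ring

lemma integral_pow_mul_delta (p : ℕ) {a b : ℝ} (ha : a ∈ Icc (0:ℝ) 1)
    (hb : b ∈ Icc (0:ℝ) 1) :
    ∫ w in (0:ℝ)..1, w ^ p * delta w a b
      = (2 * (1 - ((a + b) / 2) ^ (p + 2)) - 4 * (1 - ((1 + a) / 2) ^ (p + 2)))
          / ((p + 1) * (p + 2)) := by
  obtain ⟨ha₀, ha₁⟩ := ha
  obtain ⟨hb₀, hb₁⟩ := hb
  have split : ∀ w, w ^ p * delta w a b
      = 2 * (w ^ p * (1 - max w ((a + b) / 2))) - 4 * (w ^ p * (1 - max w ((1 + a) / 2))) :=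
    fun w => by rw [delta_eq_sub_max w a b hb₁]; ring
  simp only [split]
  have hc : ∀ t : ℝ, Continuous fun w : ℝ => w ^ p * (1 - max w t) := fun t => by fun_prop
  rw [integral_sub (((hc _).const_mul 2).intervalIntegrable _ _)
      (((hc _).const_mul 4).intervalIntegrable _ _), integral_const_mul, integral_const_mul,
    integral_pow_mul_one_sub_max p (by linarith) (by linarith),
    integral_pow_mul_one_sub_max p (by linarith) (by linarith)]
  ring

lemma D_zero_right (m : ℕ) : D m 0 = -2 * (1 - (2 ^ m)⁻¹) / (m + 1) := by
  rcases m with _ | n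
  · simp [D]
  rw [D, if_pos rfl, Nat.add_sub_cancel,
    integral_pow_mul_delta n ⟨le_rfl, zero_le_one⟩ ⟨le_rfl, zero_le_one⟩,
    show ((1:ℝ) + 0) / 2 = 2⁻¹ by norm_num, inv_pow]
  push_cast
  field_simp
  ring

lemma D_one_right (m : ℕ) (hm : 2 ≤ m) :
    D m 1 = -2 * (m - 3 + 3 * (2 ^ m)⁻¹) / (m * (m + 1)) := by
  obtain ⟨n, rfl⟩ : ∃ n, m = n + 2 := ⟨m - 2, by omega⟩
  rw [D, if_neg one_ne_zero, if_pos rfl, Nat.add_sub_cancel]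
  have inner : EqOn (fun v => ∫ w in (0:ℝ)..1, w ^ n * delta w v 0)
      (fun v => (2 * (1 - ((v + 0) / 2) ^ (n + 2)) - 4 * (1 - ((1 + v) / 2) ^ (n + 2)))
          / ((n + 1) * (n + 2))) (uIcc 0 1) := fun v hv => by
    rw [uIcc_of_le zero_le_one] at hv
    exact integral_pow_mul_delta n hv ⟨le_rfl, zero_le_one⟩
  have hF : ∀ v : ℝ, HasDerivAt
      (fun v : ℝ => (-2 * v - 4 / (n + 3) * ((1 / 2) * v + 0) ^ (n + 2 + 1)
        + 8 / (n + 3) * ((1 / 2) * v + 1 / 2) ^ (n + 2 + 1)) / ((n + 1) * (n + 2)))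
      ((2 * (1 - ((v + 0) / 2) ^ (n + 2)) - 4 * (1 - ((1 + v) / 2) ^ (n + 2)))
          / ((n + 1) * (n + 2))) v := fun v =>
    ((((hasDerivAt_id' v).const_mul (-2)).fun_sub
      ((hasDerivAt_affine_pow_succ (n + 2) (1 / 2) 0 v).const_mul (4 / ((n:ℝ) + 3)))).fun_add
      ((hasDerivAt_affine_pow_succ (n + 2) (1 / 2) (1 / 2) v).const_mul (8 / ((n:ℝ) + 3)))
      |>.div_const ((n + 1) * (n + 2)) |>.congr_deriv (by push_cast; field_simp; ring))
  rw [integral_congr inner, integral_eq_sub_of_hasDerivAt (fun v _ => hF v)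
    ((by fun_prop : Continuous _).intervalIntegrable _ _)]
  norm_num [div_pow]
  field_simp
  ring

lemma D_self (m : ℕ) (hm : 2 ≤ m) : D m m = 1 / (m + 1) := by
  obtain ⟨n, rfl⟩ : ∃ n, m = n + 2 := ⟨m - 2, by omega⟩
  rw [D, if_neg (by omega), if_neg (by omega), if_pos rfl, Nat.add_sub_cancel]
  have hδ : ∀ x ∈ Icc (0:ℝ) 1, ∀ y ∈ Icc 0 x, y ^ n * delta 0 x y = y ^ n * (x - y) :=
    fun x hx y hy => by rw [delta, if_pos (by linarith [hx.1, hy.1])]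
  rw [integral_triangle_congr hδ, integral_triangle_eq_sub_of_hasDerivAt
    (F := fun x y => x * y ^ (n + 1) / (n + 1) - y ^ (n + 2) / (n + 2))
    (G := fun x => x ^ (n + 3) / ((n + 1) * (n + 2) * (n + 3)))
    (fun x y => (((hasDerivAt_pow (n + 1) y).const_mul x).div_const _).fun_sub
      ((hasDerivAt_pow (n + 2) y).div_const _) |>.congr_deriv (by push_cast; field_simp; ring))
    (fun x => by fun_prop)
    (fun x => (hasDerivAt_pow (n + 3) x).div_const _
      |>.congr_deriv (by push_cast; field_simp; ring))
    (by fun_prop)]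
  push_cast
  field_simp
  ring

lemma choose_mul_D_of_lt {r j : ℕ} (hj : j < r) :
    ((r + 2).choose (j + 2) : ℝ) * D (r + 2) (j + 2)
      = (r + 2) * ∫ x in (0:ℝ)..1, ∫ y in (0:ℝ)..x, ((r + 1).choose j : ℝ) * (y ^ j
          * (2 * (1 - ((x + y) / 2) ^ (r + 1 - j)) - 4 * (1 - ((1 + x) / 2) ^ (r + 1 - j)))) := by
  obtain ⟨q, rfl⟩ : ∃ q, r = j + q + 1 := ⟨r - j - 1, by omega⟩
  rw [D, if_neg (by omega), if_neg (by omega), if_neg (by omega), Nat.add_sub_cancel,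
    show j + q + 1 + 2 - (j + 2) - 1 = q by omega, show j + q + 1 + 1 - j = q + 2 by omega]
  have inner : ∀ x ∈ Icc (0:ℝ) 1, ∀ y ∈ Icc 0 x,
      ∫ w in (0:ℝ)..1, y ^ j * w ^ q * delta w x y
        = (((q:ℝ) + 1) * (q + 2))⁻¹ * (y ^ j
            * (2 * (1 - ((x + y) / 2) ^ (q + 2)) - 4 * (1 - ((1 + x) / 2) ^ (q + 2)))) :=
    fun x hx y hy => by
      simp only [mul_assoc]
      rw [integral_const_mul, integral_pow_mul_delta q hx ⟨hy.1, hy.2.trans hx.2⟩]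
      ring
  have hchoose : (j + q + 3).choose (j + 2) * (j + 2) * (j + 1)
      = (j + q + 3) * (q + 2) * (j + q + 2).choose j := by
    rw [← Nat.add_one_mul_choose_eq, mul_assoc, Nat.choose_succ_right_eq,
      show j + q + 2 - j = q + 2 by omega]
    ring
  rw [integral_triangle_congr inner]
  simp only [integral_const_mul]
  simp only [← mul_assoc]
  congr 1
  have hchoose' := congrArg (Nat.cast : ℕ → ℝ) hchoose
  push_cast at hchoose' ⊢
  field_simp
  linear_combination (q + 1) * hchoose'

lemma sum_range_choose_mul_moment (r : ℕ) (x y : ℝ) :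
    ∑ j ∈ Finset.range r, ((r + 1).choose j : ℝ) * (y ^ j
      * (2 * (1 - ((x + y) / 2) ^ (r + 1 - j)) - 4 * (1 - ((1 + x) / 2) ^ (r + 1 - j))))
    = 4 * (y + (1 + x) / 2) ^ (r + 1) - 2 * (y + (x + y) / 2) ^ (r + 1) - 2 * (y + 1) ^ (r + 1)
        - (r + 1) * y ^ r * (x - y) := by
  have expand : ∀ z : ℝ,
      ∑ j ∈ Finset.range r, ((r + 1).choose j : ℝ) * (y ^ j * z ^ (r + 1 - j))
        = (y + z) ^ (r + 1) - y ^ (r + 1) - (r + 1) * y ^ r * z :=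
    sum_range_choose_mul_pow_mul_pow r y
  have split : ∑ j ∈ Finset.range r, ((r + 1).choose j : ℝ) * (y ^ j
      * (2 * (1 - ((x + y) / 2) ^ (r + 1 - j)) - 4 * (1 - ((1 + x) / 2) ^ (r + 1 - j))))
      = 4 * ∑ j ∈ Finset.range r,
            ((r + 1).choose j : ℝ) * (y ^ j * ((1 + x) / 2) ^ (r + 1 - j))
        - 2 * ∑ j ∈ Finset.range r,
            ((r + 1).choose j : ℝ) * (y ^ j * ((x + y) / 2) ^ (r + 1 - j))
        - 2 * ∑ j ∈ Finset.range r, ((r + 1).choose j : ℝ) * (y ^ j * 1 ^ (r + 1 - j)) := by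
    simp only [Finset.mul_sum, ← Finset.sum_sub_distrib]
    exact Finset.sum_congr rfl fun j _ => by ring
  rw [split, expand, expand, expand]
  ring

lemma integral_triangle_moment_sum (r : ℕ) :
    ∫ x in (0:ℝ)..1, ∫ y in (0:ℝ)..x,
      (4 * (y + (1 + x) / 2) ^ (r + 1) - 2 * (y + (x + y) / 2) ^ (r + 1) - 2 * (y + 1) ^ (r + 1)
        - (r + 1) * y ^ r * (x - y))
      = (2 * r - 1 + (2 ^ r)⁻¹) / ((r + 2) * (r + 3)) := by
  rw [integral_triangle_eq_sub_of_hasDerivAt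
    (F := fun x y => 4 / (r + 2) * (1 * y + (1 + x) / 2) ^ (r + 1 + 1)
      - 4 / (3 * (r + 2)) * (3 / 2 * y + x / 2) ^ (r + 1 + 1)
      - 2 / (r + 2) * (1 * y + 1) ^ (r + 1 + 1) - x * y ^ (r + 1) + (r + 1) / (r + 2) * y ^ (r + 2))
    (G := fun x => (8 / 3 * (3 / 2 * x + 1 / 2) ^ (r + 2 + 1) - 2 / 3 * (2 * x + 0) ^ (r + 2 + 1)
      - 2 * (1 * x + 1) ^ (r + 2 + 1) - x ^ (r + 3) - 8 * (1 / 2 * x + 1 / 2) ^ (r + 2 + 1)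
      + 8 / 3 * (1 / 2 * x + 0) ^ (r + 2 + 1) + 2 * (r + 3) * x) / ((r + 2) * (r + 3)))
    (fun x y => (((((hasDerivAt_affine_pow_succ (r + 1) 1 ((1 + x) / 2) y).const_mul _).fun_sub
      ((hasDerivAt_affine_pow_succ (r + 1) (3 / 2) (x / 2) y).const_mul _)).fun_sub
      ((hasDerivAt_affine_pow_succ (r + 1) 1 1 y).const_mul _)).fun_sub
      ((hasDerivAt_pow (r + 1) y).const_mul x)).fun_add
      ((hasDerivAt_pow (r + 2) y).const_mul _) |>.congr_deriv (by push_cast; field_simp; ring))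
    (fun x => by fun_prop)
    (fun x =>
      ((((((((hasDerivAt_affine_pow_succ (r + 2) (3 / 2) (1 / 2) x).const_mul (8 / 3)).fun_sub
      ((hasDerivAt_affine_pow_succ (r + 2) 2 0 x).const_mul (2 / 3))).fun_sub
      ((hasDerivAt_affine_pow_succ (r + 2) 1 1 x).const_mul 2)).fun_sub
      (hasDerivAt_pow (r + 3) x)).fun_sub
      ((hasDerivAt_affine_pow_succ (r + 2) (1 / 2) (1 / 2) x).const_mul 8)).fun_add
      ((hasDerivAt_affine_pow_succ (r + 2) (1 / 2) 0 x).const_mul (8 / 3))).fun_add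
      ((hasDerivAt_id' x).const_mul (2 * ((r:ℝ) + 3)))).div_const _
      |>.congr_deriv (by push_cast; field_simp; ring))
    (by fun_prop)]
  norm_num [div_pow]
  field_simp
  ring

lemma sum_range_choose_mul_D_add_two (r : ℕ) :
    ∑ j ∈ Finset.range r, ((r + 2).choose (j + 2) : ℝ) * D (r + 2) (j + 2)
      = (2 * r - 1 + (2 ^ r)⁻¹) / (r + 3) := by
  rw [Finset.sum_congr rfl fun j hj => choose_mul_D_of_lt (Finset.mem_range.1 hj),
    ← Finset.mul_sum, integral_triangle_finset_sum _ fun j _ => by fun_prop,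
    integral_triangle_congr fun x _ y _ => sum_range_choose_mul_moment r x y,
    integral_triangle_moment_sum]
  field_simp

theorem stmt_8 (m : ℕ) (hm : 2 ≤ m) :
    ∑ k ∈ Finset.range (m + 1), (m.choose k : ℝ) * D m k = 0 := by
  obtain ⟨r, rfl⟩ : ∃ r, m = r + 2 := ⟨m - 2, by omega⟩
  rw [Finset.sum_range_succ, Finset.sum_range_succ', Finset.sum_range_succ',
    sum_range_choose_mul_D_add_two, D_zero_right, D_one_right _ (by omega), D_self _ (by omega)]
  simp only [zero_add, Nat.choose_self, Nat.choose_one_right, Nat.choose_zero_right]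
  push_cast
  field_simp
  ring
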